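/- For all n ≥ 3, m_X(n,3) ≤ n^{n+1} · p_X(n,3), where m_X(n,3) is the number of rank-3 matroids on Fin n with no minor isomorphic to 𝒲³ or M(K₄), and p_X(n,3) is the number of rank-3 paving matroids on Fin n with no minor isomorphic to 𝒲³ or M(K₄). -/

import Mathlib

open Matroid Set Filter

namespace Paper

variable {α β : Type*}

/-- Deletion of a set from a matroid. -/
def Delete (M : Matroid α) (D : Set α) : Matroid α := M ↾ (M.E \ D)

/-- Contraction of a set in a matroid, defined via duality. -/
def Contract (M : Matroid α) (C : Set α) : Matroid α := (Delete M✶ C)✶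

/-- `N` is a minor of `M` if it is obtained from `M` by a contraction followed by a deletion. -/
def IsMinor (N M : Matroid α) : Prop := ∃ C D : Set α, N = Delete (Contract M C) D

/-- `M` is isomorphic to `N`. -/
def Iso (M : Matroid α) (N : Matroid β) : Prop :=
  ∃ (f : α → β) (hf : Set.InjOn f M.E), M.map f hf = N

/-- `M` has a minor isomorphic to `N`. -/
def HasIsoMinor (M : Matroid α) (N : Matroid β) : Prop :=
  ∃ M' : Matroid α, IsMinor M' M ∧ Iso M' N

/-- A circuit is a minimal dependent set. -/
def Circuit (M : Matroid α) (C : Set α) : Prop := M.Dep C ∧ ∀ D, D ⊂ C → M.Indep D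

/-- A hyperplane is a maximal proper flat. -/
def Hyperplane (M : Matroid α) (H : Set α) : Prop :=
  M.IsFlat H ∧ H ≠ M.E ∧ ∀ F, M.IsFlat F → H ⊂ F → F = M.E

/-- A matroid is sparse paving if every nonspanning circuit is a hyperplane. -/
def SparsePaving (M : Matroid α) : Prop :=
  ∀ C, Circuit M C → ¬ M.Spanning C → Hyperplane M C

/-- `M` has rank `r`: some base has exactly `r` elements. -/
def RankEq (M : Matroid α) (r : ℕ) : Prop := ∃ B, M.IsBase B ∧ B.ncard = r

/-- `N` is (isomorphic to) the rank-3 whirl `𝒲³`: the rank-3 sparse paving matroid on six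
elements whose 3-element circuits are exactly the three listed triples. -/
def IsWhirl3 (N : Matroid α) : Prop :=
  ∃ a : Fin 6 → α, Function.Injective a ∧ N.E = Set.range a ∧
    RankEq N 3 ∧ SparsePaving N ∧
    ∀ C : Set α, (Circuit N C ∧ C.ncard = 3) ↔
      (C = {a 0, a 1, a 2} ∨ C = {a 2, a 3, a 4} ∨ C = {a 4, a 5, a 0})

/-- `N` is (isomorphic to) `M(K₄)`: the rank-3 sparse paving matroid on six elements whose
3-element circuits are exactly the four listed triples. -/
def IsMK4 (N : Matroid α) : Prop :=
  ∃ a : Fin 6 → α, Function.Injective a ∧ N.E = Set.range a ∧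
    RankEq N 3 ∧ SparsePaving N ∧
    ∀ C : Set α, (Circuit N C ∧ C.ncard = 3) ↔
      (C = {a 0, a 1, a 2} ∨ C = {a 2, a 3, a 4} ∨ C = {a 4, a 5, a 0} ∨ C = {a 1, a 3, a 5})

/-- `M` has no minor isomorphic to `𝒲³` and no minor isomorphic to `M(K₄)`. -/
def WFree (M : Matroid α) : Prop :=
  (¬ ∃ N : Matroid α, IsMinor N M ∧ IsWhirl3 N) ∧
  (¬ ∃ N : Matroid α, IsMinor N M ∧ IsMK4 N)

end Paper

namespace Paper

/-- A rank-3 paving matroid: every circuit has 3 or 4 elements. -/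
def Paving3 (M : Matroid α) : Prop :=
  RankEq M 3 ∧ ∀ C, Circuit M C → C.ncard = 3 ∨ C.ncard = 4

end Paper

/-!
A rank-3 matroid `M` on `Fin n` is recorded by its loops and parallel classes (a map
`Fin n → Option (Fin n)`, so `(n + 1) ^ n ≤ n ^ (n + 1)` choices) together with the matroid obtained
by keeping one representative of each parallel class and placing every other element freely in
rank 3. The latter is paving, since the simplification of `M` has no circuits with fewer than three
elements, and it is again `{𝒲³, M(K₄)}`-free: both excluded minors have rank 3 and every element on
a triangle, so such a minor cannot use a freely placed element and already lives on the
representatives, where nothing has changed.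
-/

namespace Paper

section Basics

variable {α : Type*} {M N : Matroid α} {C I : Set α} {r : ℕ}

lemma isMinor_iff : IsMinor N M ↔ ∃ C D : Set α, N = M ／ C ＼ D := Iff.rfl

lemma circuit_iff_isCircuit : Circuit M C ↔ M.IsCircuit C :=
  isCircuit_iff_forall_ssubset.symm

lemma RankEq.ncard_le_of_indep [Finite α] (hM : RankEq M r) (hI : M.Indep I) : I.ncard ≤ r := by
  obtain ⟨B, hB, rfl⟩ := hM
  obtain ⟨B', hB', hIB'⟩ := hI.exists_isBase_superset
  exact (ncard_le_ncard hIB').trans (hB'.ncard_eq_ncard_of_isBase hB).le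

instance [Finite α] : Finite (Matroid α) :=
  Finite.of_injective (fun M : Matroid α ↦ (M.E, M.Indep)) fun M₁ M₂ h ↦
    by simp only [Prod.mk.injEq] at h; exact ext_indep h.1 fun I _ ↦ by rw [h.2]

end Basics

section Parallel

variable {α : Type*} {M M₁ M₂ : Matroid α} {e f : α} {I : Set α}

/-- Depends on `e` only through `M.closure {e}`, so it is constant on parallel classes. -/
noncomputable def rep (M : Matroid α) (e : α) : α :=
  haveI : Nonempty α := ⟨e⟩
  Classical.epsilon fun f ↦ M.closure {f} = M.closure {e}

lemma closure_rep (M : Matroid α) (e : α) : M.closure {rep M e} = M.closure {e} :=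
  haveI : Nonempty α := ⟨e⟩
  Classical.epsilon_spec (p := fun f ↦ M.closure {f} = M.closure {e}) ⟨e, rfl⟩

lemma rep_eq_rep_iff : rep M e = rep M f ↔ M.closure {e} = M.closure {f} :=
  ⟨fun h ↦ by rw [← closure_rep M e, h, closure_rep], fun h ↦ by simp only [rep, h]⟩

lemma rep_rep (M : Matroid α) (e : α) : rep M (rep M e) = rep M e :=
  rep_eq_rep_iff.2 (closure_rep M e)

lemma isNonloop_rep (he : M.IsNonloop e) : M.IsNonloop (rep M e) := by
  by_contra h
  rw [not_isNonloop_iff_closure, closure_rep, ← not_isNonloop_iff_closure] at h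
  exact h he

lemma rep_mem_closure_singleton (he : M.IsNonloop e) : rep M e ∈ M.closure {e} := by
  rw [← closure_rep]
  exact M.mem_closure_self _ (isNonloop_rep he).mem_ground

lemma mem_closure_singleton_rep (he : M.IsNonloop e) : e ∈ M.closure {rep M e} := by
  rw [closure_rep]
  exact M.mem_closure_self _ he.mem_ground

lemma closure_image_rep (hI : ∀ e ∈ I, M.IsNonloop e) : M.closure (rep M '' I) = M.closure I := by
  refine subset_antisymm (M.closure_subset_closure_of_subset_closure ?_)
    (M.closure_subset_closure_of_subset_closure fun e he ↦ ?_)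
  · rintro _ ⟨e, he, rfl⟩
    exact M.closure_subset_closure (singleton_subset_iff.2 he) (rep_mem_closure_singleton (hI e he))
  · exact M.closure_subset_closure (singleton_subset_iff.2 (mem_image_of_mem _ he))
      (mem_closure_singleton_rep (hI e he))

lemma injOn_rep (hI : M.Indep I) : InjOn (rep M) I := fun _ he _ hf h ↦
  (((hI.isNonloop_of_mem he).closure_eq_closure_iff_eq_or_dep (hI.isNonloop_of_mem hf)).1
    (rep_eq_rep_iff.1 h)).resolve_right fun hef ↦ hef (hI.subset (pair_subset he hf))

lemma indep_image_rep_iff (hI : ∀ e ∈ I, M.IsNonloop e) (hinj : InjOn (rep M) I)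
    (hfin : I.Finite) : M.Indep (rep M '' I) ↔ M.Indep I := by
  rw [indep_iff_eRk_eq_encard_of_finite (hfin.image _), indep_iff_eRk_eq_encard_of_finite hfin,
    ← eRk_closure_eq, closure_image_rep hI, eRk_closure_eq, hinj.encard_image]

open scoped Classical in
noncomputable def parallelCode (M : Matroid α) (e : α) : Option α :=
  if M.IsNonloop e then some (rep M e) else none

lemma parallelCode_eq_some_iff : parallelCode M e = some f ↔ M.IsNonloop e ∧ rep M e = f := by
  unfold parallelCode
  split_ifs with he <;> simp [he]

def reps (M : Matroid α) : Set α := {e | parallelCode M e = some e}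

lemma mem_reps_iff : e ∈ reps M ↔ M.IsNonloop e ∧ rep M e = e := parallelCode_eq_some_iff

lemma rep_mem_reps (he : M.IsNonloop e) : rep M e ∈ reps M :=
  mem_reps_iff.2 ⟨isNonloop_rep he, rep_rep M e⟩

lemma indep_pair_of_mem_reps (he : e ∈ reps M) (hf : f ∈ reps M) : M.Indep {e, f} := by
  rw [mem_reps_iff] at he hf
  by_contra hef
  obtain rfl : e = f := by
    rw [← he.2, ← hf.2, rep_eq_rep_iff, he.1.closure_eq_closure_iff_eq_or_dep hf.1]
    exact Or.inr hef
  exact hef (by simpa using he.1.indep)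

lemma indep_of_parallelCode_eq (hcode : parallelCode M₁ = parallelCode M₂)
    (hreps : ∀ J ⊆ reps M₁, M₁.Indep J → M₂.Indep J) (hI : M₁.Indep I) (hfin : I.Finite) :
    M₂.Indep I := by
  have hI₂ : ∀ e ∈ I, M₂.IsNonloop e ∧ rep M₂ e = rep M₁ e := fun e he ↦
    parallelCode_eq_some_iff.1 (hcode ▸ parallelCode_eq_some_iff.2 ⟨hI.isNonloop_of_mem he, rfl⟩)
  have hrep : EqOn (rep M₁) (rep M₂) I := fun e he ↦ (hI₂ e he).2.symm
  rw [← indep_image_rep_iff (fun e he ↦ (hI₂ e he).1) ((injOn_rep hI).congr hrep) hfin,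
    ← hrep.image_eq]
  refine hreps _ ?_
    ((indep_image_rep_iff (fun e he ↦ hI.isNonloop_of_mem he) (injOn_rep hI) hfin).2 hI)
  rintro _ ⟨e, he, rfl⟩
  exact rep_mem_reps (hI.isNonloop_of_mem he)

lemma ext_parallelCode [Finite α] (hE : M₁.E = M₂.E) (hcode : parallelCode M₁ = parallelCode M₂)
    (hreps : M₁ ↾ reps M₁ = M₂ ↾ reps M₂) : M₁ = M₂ := by
  have transfer {M M' : Matroid α} {I : Set α} (hcode : parallelCode M = parallelCode M')
      (hreps : M ↾ reps M = M' ↾ reps M') (hI : M.Indep I) : M'.Indep I := by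
    refine indep_of_parallelCode_eq hcode (fun J hJ hJi ↦ ?_) hI (toFinite I)
    have : (M' ↾ reps M').Indep J := hreps ▸ (restrict_indep_iff.2 ⟨hJi, hJ⟩)
    exact this.of_restrict
  exact ext_indep hE fun I _ ↦ ⟨transfer hcode hreps, transfer hcode.symm hreps.symm⟩

end Parallel

section FreeExtension

variable {α : Type*} [Finite α] {M : Matroid α} {S R C I J : Set α} {r : ℕ}

lemma exists_insert_of_ncard_lt (hI : I.ncard ≤ r ∧ M.Indep (I ∩ S))
    (hJ : J.ncard ≤ r ∧ M.Indep (J ∩ S)) (hIJ : I.ncard < J.ncard) :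
    ∃ e ∈ J, e ∉ I ∧ (insert e I).ncard ≤ r ∧ M.Indep (insert e I ∩ S) := by
  have hcard (e : α) : (insert e I).ncard ≤ r := (ncard_insert_le e I).trans (by omega)
  by_cases hJI : J \ I ⊆ S
  · have hlt : (I ∩ S).ncard < (J ∩ S).ncard := by
      have hJS : J \ S ⊆ I \ S := fun x hx ↦ ⟨by_contra fun hxI ↦ hx.2 (hJI ⟨hx.1, hxI⟩), hx.2⟩
      have := ncard_le_ncard hJS
      have := ncard_inter_add_ncard_sdiff_eq_ncard I S
      have := ncard_inter_add_ncard_sdiff_eq_ncard J S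
      omega
    obtain ⟨e, ⟨⟨heJ, heS⟩, heI⟩, hins⟩ := hI.2.augment hJ.2 <| by
      rwa [← (toFinite _).cast_ncard_eq, ← (toFinite _).cast_ncard_eq, Nat.cast_lt]
    exact ⟨e, heJ, fun h ↦ heI ⟨h, heS⟩, hcard e, by rwa [insert_inter_of_mem heS]⟩
  · obtain ⟨e, ⟨heJ, heI⟩, heS⟩ := not_subset.1 hJI
    exact ⟨e, heJ, heI, hcard e, by rw [insert_inter_of_notMem heS]; exact hI.2⟩

/-- The rank-`r` truncation of `(M ↾ S) ⊕ freeOn Sᶜ`: when `M ↾ S` has rank `r`, this is the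
free extension of `M ↾ S` by all elements outside `S`. -/
noncomputable def freeExtension (M : Matroid α) (S : Set α) (r : ℕ) : Matroid α :=
  (IndepMatroid.ofFinite finite_univ (fun I ↦ I.ncard ≤ r ∧ M.Indep (I ∩ S))
    (by simp)
    (fun _ _ hJ hIJ ↦
      ⟨(ncard_le_ncard hIJ).trans hJ.1, hJ.2.subset (inter_subset_inter_left _ hIJ)⟩)
    (fun _ _ hI hJ hIJ ↦ exists_insert_of_ncard_lt hI hJ hIJ)
    (fun I _ ↦ subset_univ I)).matroid

@[simp]
lemma freeExtension_ground : (freeExtension M S r).E = univ := rfl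

@[simp]
lemma freeExtension_indep_iff : (freeExtension M S r).Indep I ↔ I.ncard ≤ r ∧ M.Indep (I ∩ S) := by
  simp [freeExtension]

lemma freeExtension_restrict (hM : RankEq M r) (hR : R ⊆ S) : freeExtension M S r ↾ R = M ↾ R := by
  refine ext_indep rfl fun I hI ↦ ?_
  have hIS : I ∩ S = I := inter_eq_self_of_subset_left (hI.trans hR)
  simp only [restrict_indep_iff, freeExtension_indep_iff, hIS]
  exact ⟨fun h ↦ ⟨h.1.2, h.2⟩, fun h ↦ ⟨⟨hM.ncard_le_of_indep h.1, h.1⟩, h.2⟩⟩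

lemma eq_of_parallelCode_eq_of_freeExtension_eq {M₁ M₂ : Matroid α} (hE : M₁.E = M₂.E)
    (h₁ : RankEq M₁ r) (h₂ : RankEq M₂ r) (hcode : parallelCode M₁ = parallelCode M₂)
    (hfree : freeExtension M₁ (reps M₁) r = freeExtension M₂ (reps M₂) r) : M₁ = M₂ := by
  refine ext_parallelCode hE hcode ?_
  have hreps : reps M₁ = reps M₂ := by simp only [reps, hcode]
  rw [← freeExtension_restrict h₁ subset_rfl, ← freeExtension_restrict h₂ subset_rfl, hfree, hreps]

lemma rankEq_freeExtension (hM : RankEq M r) : RankEq (freeExtension M S r) r := by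
  obtain ⟨B, hB, hBr⟩ := hM
  have hBi : (freeExtension M S r).Indep B :=
    freeExtension_indep_iff.2 ⟨hBr.le, hB.indep.subset inter_subset_left⟩
  refine ⟨B, hBi.isBase_of_forall_insert fun e he hins ↦ ?_, hBr⟩
  have := (freeExtension_indep_iff.1 hins).1
  rw [ncard_insert_of_notMem he.2] at this
  omega

lemma loopless_freeExtension (hS : ∀ e ∈ S, M.IsNonloop e) (hr : r ≠ 0) :
    (freeExtension M S r).Loopless := by
  refine loopless_iff_forall_isNonloop.2 fun e _ ↦ indep_singleton.1 ?_
  refine freeExtension_indep_iff.2 ⟨by rw [ncard_singleton]; omega, ?_⟩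
  by_cases he : e ∈ S
  · rw [inter_eq_self_of_subset_left (singleton_subset_iff.2 he)]
    exact (hS e he).indep
  · rw [singleton_inter_eq_empty.2 he]
    exact M.empty_indep

/-- Elements outside `S` are free, so they do not lie on small circuits. -/
lemma subset_of_isCircuit_freeExtension (hC : (freeExtension M S r).IsCircuit C)
    (hCr : C.ncard ≤ r) : C ⊆ S := by
  intro e heC
  by_contra heS
  have hdiff := freeExtension_indep_iff.1 (hC.sdiff_singleton_indep heC)
  rw [← inter_sdiff_right_comm, sdiff_singleton_eq_self fun h : e ∈ C ∩ S ↦ heS h.2] at hdiff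
  exact hC.not_indep (freeExtension_indep_iff.2 ⟨hCr, hdiff.2⟩)

lemma ncard_le_of_isCircuit_freeExtension (hC : (freeExtension M S r).IsCircuit C) :
    C.ncard ≤ r + 1 := by
  by_contra! h
  obtain ⟨D, hDC, hD⟩ := exists_subset_card_eq h.le
  have := (freeExtension_indep_iff.1 (hC.ssubset_indep (hDC.ssubset_of_ne ?_))).1
  · omega
  · rintro rfl
    omega

end FreeExtension

section Minors

variable {α : Type*} [Finite α] {M N P : Matroid α} {S C I X : Set α} {r : ℕ}

lemma indep_of_ncard_le_two (hS : ∀ e ∈ S, ∀ f ∈ S, M.Indep {e, f}) (hX : X ⊆ S)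
    (h : X.ncard ≤ 2) : M.Indep X := by
  interval_cases hX2 : X.ncard
  · rw [(ncard_eq_zero (toFinite X)).1 hX2]
    exact M.empty_indep
  · obtain ⟨e, rfl⟩ := ncard_eq_one.1 hX2
    simpa using hS e (hX rfl) e (hX rfl)
  · obtain ⟨e, f, -, rfl⟩ := ncard_eq_two.1 hX2
    exact hS e (hX (mem_insert e {f})) f (hX (mem_insert_of_mem e rfl))

lemma paving3_freeExtension (hS : ∀ e ∈ S, ∀ f ∈ S, M.Indep {e, f}) (hM : RankEq M 3) :
    Paving3 (freeExtension M S 3) := by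
  refine ⟨rankEq_freeExtension hM, fun C hC ↦ ?_⟩
  rw [circuit_iff_isCircuit] at hC
  have h4 := ncard_le_of_isCircuit_freeExtension hC
  have h3 : 3 ≤ C.ncard := by
    by_contra! h
    have hCS := subset_of_isCircuit_freeExtension hC h.le
    refine hC.not_indep (freeExtension_indep_iff.2 ⟨h.le, ?_⟩)
    rw [inter_eq_self_of_subset_left hCS]
    exact indep_of_ncard_le_two hS hCS (by omega)
  omega

/-- Contracting a nonempty set in a loopless matroid lowers its rank. -/
lemma eq_empty_of_contract_indep [P.Loopless] (hP : P.E = univ) (hr : RankEq P r)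
    (hI : (P ／ C).Indep I) (hIr : I.ncard = r) : C = ∅ := by
  obtain ⟨J, hJ⟩ := P.exists_isBasis C (hP ▸ subset_univ C)
  rw [hJ.contract_indep_iff] at hI
  have hJ0 : J = ∅ := by
    have hcard := hr.ncard_le_of_indep hI.1
    rw [ncard_union_eq (hI.2.mono_left hJ.subset).symm, hIr] at hcard
    exact (ncard_eq_zero (toFinite J)).1 (by omega)
  have hC := hJ.subset_closure
  rwa [hJ0, Matroid.closure_empty, loops_eq_empty, subset_empty_iff] at hC

/-- Such a minor cannot use the elements that `freeExtension` adds freely. -/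
lemma isMinor_of_isMinor_freeExtension (hE : M.E = univ) (hM : RankEq M r) (hr : r ≠ 0)
    (hS : ∀ e ∈ S, M.IsNonloop e) (hN : IsMinor N (freeExtension M S r)) (hNr : RankEq N r)
    (hcirc : ∀ e ∈ N.E, ∃ T, Circuit N T ∧ T.ncard ≤ r ∧ e ∈ T) : IsMinor N M := by
  have := loopless_freeExtension hS hr
  obtain ⟨C, D, rfl⟩ := isMinor_iff.1 hN
  obtain ⟨B, hB, hBr⟩ := hNr
  obtain rfl : C = ∅ :=
    eq_empty_of_contract_indep freeExtension_ground (rankEq_freeExtension hM) hB.indep.of_delete hBr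
  rw [contract_empty, delete_eq_restrict, freeExtension_ground] at hcirc ⊢
  have hDS : univ \ D ⊆ S := fun e he ↦ by
    obtain ⟨T, hT, hTr, heT⟩ := hcirc e he
    rw [circuit_iff_isCircuit, restrict_isCircuit_iff] at hT
    exact subset_of_isCircuit_freeExtension hT.1 hTr heT
  refine isMinor_iff.2 ⟨∅, D, ?_⟩
  rw [contract_empty, delete_eq_restrict, hE, freeExtension_restrict hM hDS]

end Minors

section ExcludedMinors

variable {α : Type*} {N : Matroid α}

lemma forall_mem_circuit_of_whirl_triangles {a : Fin 6 → α} (hE : N.E = range a)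
    (htri : ∀ T : Set α, T = {a 0, a 1, a 2} ∨ T = {a 2, a 3, a 4} ∨ T = {a 4, a 5, a 0} →
      Circuit N T ∧ T.ncard = 3) :
    ∀ e ∈ N.E, ∃ T, Circuit N T ∧ T.ncard ≤ 3 ∧ e ∈ T := by
  rw [hE]
  rintro _ ⟨i, rfl⟩
  have triangle (T : Set α) (hT : T = {a 0, a 1, a 2} ∨ T = {a 2, a 3, a 4} ∨ T = {a 4, a 5, a 0})
      (hi : a i ∈ T) : ∃ T, Circuit N T ∧ T.ncard ≤ 3 ∧ a i ∈ T :=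
    ⟨T, (htri T hT).1, (htri T hT).2.le, hi⟩
  fin_cases i
  · exact triangle {a 0, a 1, a 2} (by simp) (by simp)
  · exact triangle {a 0, a 1, a 2} (by simp) (by simp)
  · exact triangle {a 0, a 1, a 2} (by simp) (by simp)
  · exact triangle {a 2, a 3, a 4} (by simp) (by simp)
  · exact triangle {a 2, a 3, a 4} (by simp) (by simp)
  · exact triangle {a 4, a 5, a 0} (by simp) (by simp)

lemma IsWhirl3.rankEq_and_forall_mem_circuit (hN : IsWhirl3 N) :
    RankEq N 3 ∧ ∀ e ∈ N.E, ∃ T, Circuit N T ∧ T.ncard ≤ 3 ∧ e ∈ T := by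
  obtain ⟨a, -, hE, hr, -, hcirc⟩ := hN
  exact ⟨hr, forall_mem_circuit_of_whirl_triangles hE fun T hT ↦ (hcirc T).2 hT⟩

lemma IsMK4.rankEq_and_forall_mem_circuit (hN : IsMK4 N) :
    RankEq N 3 ∧ ∀ e ∈ N.E, ∃ T, Circuit N T ∧ T.ncard ≤ 3 ∧ e ∈ T := by
  obtain ⟨a, -, hE, hr, -, hcirc⟩ := hN
  exact ⟨hr, forall_mem_circuit_of_whirl_triangles hE fun T hT ↦ (hcirc T).2 (by tauto)⟩

lemma wFree_freeExtension_reps [Finite α] {M : Matroid α} (hE : M.E = univ) (hM : RankEq M 3)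
    (hfree : WFree M) : WFree (freeExtension M (reps M) 3) := by
  have transfer {N : Matroid α} (hN : IsMinor N (freeExtension M (reps M) 3))
      (hNr : RankEq N 3 ∧ ∀ e ∈ N.E, ∃ T, Circuit N T ∧ T.ncard ≤ 3 ∧ e ∈ T) : IsMinor N M :=
    isMinor_of_isMinor_freeExtension hE hM three_ne_zero (fun _ he ↦ (mem_reps_iff.1 he).1) hN
      hNr.1 hNr.2
  exact ⟨fun ⟨N, hN, hW⟩ ↦ hfree.1 ⟨N, transfer hN hW.rankEq_and_forall_mem_circuit, hW⟩,
    fun ⟨N, hN, hK⟩ ↦ hfree.2 ⟨N, transfer hN hK.rankEq_and_forall_mem_circuit, hK⟩⟩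

end ExcludedMinors

/-- `(1 + 1/n)^n < e < 3 ≤ n`. -/
lemma succ_pow_le_pow_succ {n : ℕ} (hn : 3 ≤ n) : (n + 1) ^ n ≤ n ^ (n + 1) := by
  have hn' : (3 : ℝ) ≤ n := by exact_mod_cast hn
  have hsucc : (n : ℝ) + 1 ≤ n * Real.exp (1 / n) := by
    have := Real.add_one_le_exp (1 / (n : ℝ))
    calc (n : ℝ) + 1 = n * (1 / n + 1) := by field_simp; ring
      _ ≤ n * Real.exp (1 / n) := by gcongr
  have : ((n : ℝ) + 1) ^ n ≤ n ^ (n + 1) :=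
    calc ((n : ℝ) + 1) ^ n ≤ (n * Real.exp (1 / n)) ^ n := by gcongr
      _ = n ^ n * Real.exp 1 := by
        rw [mul_pow, ← Real.exp_nat_mul, mul_one_div_cancel (by positivity)]
      _ ≤ n ^ n * n := by gcongr; linarith [Real.exp_one_lt_three]
      _ = n ^ (n + 1) := by ring
  exact_mod_cast this

/-- For `n ≥ 3`, `m_X(n,3) ≤ n^{n+1} · p_X(n,3)`: the number of rank-3 `{𝒲³, M(K₄)}`-free
matroids on `Fin n` is at most `n^{n+1}` times the number of rank-3 `{𝒲³, M(K₄)}`-free paving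
matroids on `Fin n`. -/
theorem rank3_count_le_paving_count (n : ℕ) (hn : 3 ≤ n) :
    Set.ncard {M : Matroid (Fin n) | M.E = Set.univ ∧ RankEq M 3 ∧ WFree M} ≤
      n ^ (n + 1) *
        Set.ncard {M : Matroid (Fin n) | M.E = Set.univ ∧ Paving3 M ∧ WFree M} := by
  set A := {M : Matroid (Fin n) | M.E = Set.univ ∧ RankEq M 3 ∧ WFree M}
  set P := {M : Matroid (Fin n) | M.E = Set.univ ∧ Paving3 M ∧ WFree M}
  let encode (M : Matroid (Fin n)) : (Fin n → Option (Fin n)) × Matroid (Fin n) :=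
    (parallelCode M, freeExtension M (reps M) 3)
  have hmaps : ∀ M ∈ A, encode M ∈ univ ×ˢ P := fun M ⟨hE, hM, hfree⟩ ↦
    ⟨trivial, rfl, paving3_freeExtension (fun _ he _ hf ↦ indep_pair_of_mem_reps he hf) hM,
      wFree_freeExtension_reps hE hM hfree⟩
  have hinj : InjOn encode A := fun M₁ ⟨hE₁, hM₁, _⟩ M₂ ⟨hE₂, hM₂, _⟩ h ↦
    eq_of_parallelCode_eq_of_freeExtension_eq (hE₁.trans hE₂.symm) hM₁ hM₂
      (congrArg Prod.fst h) (congrArg Prod.snd h)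
  calc A.ncard ≤ (univ ×ˢ P).ncard := ncard_le_ncard_of_injOn encode hmaps hinj (toFinite _)
    _ = (n + 1) ^ n * P.ncard := by simp [ncard_prod]
    _ ≤ n ^ (n + 1) * P.ncard := Nat.mul_le_mul_right _ (succ_pow_le_pow_succ hn)

end Paper
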